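/- arXiv:0809.2554 — 9 statements merged into one kernel-verified Lean document; each statement's English description precedes it below -/
import Mathlib

section
/- Let (V,d) be a finite metric space and let F, F* ⊆ V be nonempty sets with |F| = |F*| = k. Suppose F is single-swap locally optimal for the k-median objective, i.e., for every r ∈ F and every f' ∈ V we have kmed((F \ {r}) ∪ {f'}) ≥ kmed(F). Then kmed(F) ≤ 5 · kmed(F*). -/
/-!
The swap argument of Arya et al. Let `σ` and `τ` send a client to a nearest facility of `F` and of
`F*`. Pair every `o ∈ F*` with some `ρ o ∈ F` so that `ρ o` is nearest to no point of `F*`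
other than `o`, and no facility is used more than twice; such a pairing exists because
`|F*| ≤ |F|`. In the swap `(ρ o, o)` the clients with `τ j = o` move to `o`, the other clients
of `ρ o` move to `σ (τ j)` at cost at most `2 d(j, τ j) + d(j, σ j)`, and everyone else stays.
Local optimality makes each swap non-improving, and adding up the `|F*|` inequalities, every
client moves to `τ j` once and is rerouted at most twice, which gives
`0 ≤ kmed(F*) - kmed(F) + 4 kmed(F*)`.
-/

open Finset

/-- Distance from a client `j` to a nonempty facility set `F`: `min_{f ∈ F} d(j,f)`. -/
noncomputable def distSet {V : Type*} [MetricSpace V] (j : V) (F : Finset V)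
    (hF : F.Nonempty) : ℝ :=
  F.inf' hF fun f => dist j f

/-- The k-median cost of a nonempty facility set `F`: `∑_{j ∈ V} d(j,F)`. -/
noncomputable def kmed {V : Type*} [MetricSpace V] [Fintype V] (F : Finset V)
    (hF : F.Nonempty) : ℝ :=
  ∑ j : V, distSet j F hF

section Pairing

variable {α β : Type*} [DecidableEq β]

theorem exists_fiber_card_le_of_card_le_mul [Nonempty β] {X : Finset α} {Y : Finset β} {n : ℕ}
    (h : #X ≤ n * #Y) : ∃ π : α → β, (∀ x ∈ X, π x ∈ Y) ∧ ∀ y, #{x ∈ X | π x = y} ≤ n := by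
  classical
  have hcard : Fintype.card X ≤ Fintype.card (Y × Fin n) := by simpa [mul_comm] using h
  obtain ⟨e⟩ := Function.Embedding.nonempty_of_card_le hcard
  set π : α → β := fun x => if hx : x ∈ X then (e ⟨x, hx⟩).1 else Classical.arbitrary β
  have hπ : ∀ x (hx : x ∈ X), π x = (e ⟨x, hx⟩).1 := fun x hx => by simp [π, hx]
  refine ⟨π, fun x hx => hπ x hx ▸ (e ⟨x, hx⟩).1.2, fun y => ?_⟩
  let slot : {x // x ∈ {x ∈ X | π x = y}} → Fin n := fun x => (e ⟨x, (mem_filter.1 x.2).1⟩).2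
  have hslot : Function.Injective slot := by
    rintro ⟨x, hx⟩ ⟨x', hx'⟩ h
    obtain ⟨hxX, rfl⟩ := mem_filter.1 hx
    obtain ⟨hx'X, hxx'⟩ := mem_filter.1 hx'
    have : e ⟨x, hxX⟩ = e ⟨x', hx'X⟩ :=
      Prod.ext (Subtype.ext ((hπ x hxX).symm.trans (hxx'.symm.trans (hπ x' hx'X)))) h
    simpa using e.injective this
  simpa using Fintype.card_le_of_injective slot hslot

theorem card_mem_large_fiber_le_two_mul_card_empty_fiber (s : α → β) {A : Finset α}
    {B : Finset β} (hs : ∀ a ∈ A, s a ∈ B) (hcard : #A ≤ #B) :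
    #{a ∈ A | 2 ≤ #{a' ∈ A | s a' = s a}} ≤ 2 * #{b ∈ B | #{a ∈ A | s a = b} = 0} := by
  set c : β → ℕ := fun b => #{a ∈ A | s a = b}
  show #{a ∈ A | 2 ≤ c (s a)} ≤ 2 * #{b ∈ B | c b = 0}
  have hA : #A = ∑ b ∈ B, c b := card_eq_sum_card_fiberwise hs
  have hlarge : #{a ∈ A | 2 ≤ c (s a)} = ∑ b ∈ B, if 2 ≤ c b then c b else 0 := by
    rw [card_eq_sum_card_fiberwise (t := B) fun a ha => hs a (mem_filter.1 ha).1]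
    refine sum_congr rfl fun b _ => ?_
    rw [filter_filter]
    split_ifs with hb
    · exact congrArg card (filter_congr fun a _ => by constructor <;> rintro ⟨_, rfl⟩ <;> simp_all)
    · exact card_eq_zero.2 (filter_false_of_mem fun a _ ⟨h, hsa⟩ => hb (hsa ▸ h))
  -- Pointwise `[2 ≤ c] c + 2 ≤ 2 c + 2 [c = 0]`; summed over `B` this is the claim, as `#A ≤ #B`.
  have key : ∑ b ∈ B, ((if 2 ≤ c b then c b else 0) + 2) ≤
      ∑ b ∈ B, (2 * c b + 2 * if c b = 0 then 1 else 0) :=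
    sum_le_sum fun b _ => by split_ifs <;> omega
  rw [sum_add_distrib, sum_add_distrib, ← mul_sum, ← mul_sum, ← hlarge, ← hA, ← card_filter,
    sum_const, smul_eq_mul] at key
  omega

theorem exists_partner_fiber_card_le_two (s : α → β) {A : Finset α} {B : Finset β}
    (hs : ∀ a ∈ A, s a ∈ B) (hcard : #A ≤ #B) :
    ∃ ρ : α → β, (∀ a ∈ A, ρ a ∈ B) ∧ (∀ a ∈ A, ∀ a' ∈ A, s a' = ρ a → a' = a) ∧
      ∀ b, #{a ∈ A | ρ a = b} ≤ 2 := by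
  classical
  rcases A.eq_empty_or_nonempty with rfl | ⟨a₀, -⟩
  · exact ⟨s, by simp⟩
  have : Nonempty β := ⟨s a₀⟩
  set c : β → ℕ := fun b => #{a ∈ A | s a = b}
  set L := {a ∈ A | 2 ≤ c (s a)}
  obtain ⟨π, hπ, hπfiber⟩ := exists_fiber_card_le_of_card_le_mul
    (card_mem_large_fiber_le_two_mul_card_empty_fiber s hs hcard)
  have hempty : ∀ a ∈ A, c (s a) ≠ 0 := fun a ha =>
    card_ne_zero_of_mem (mem_filter.2 ⟨ha, rfl⟩)
  have hsmall : ∀ a ∈ A, a ∉ L → ∀ a' ∈ A, s a' = s a → a' = a := fun a ha haL a' ha' h =>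
    have hca : c (s a) ≤ 1 := by simp [L, ha] at haL; omega
    card_le_one.1 hca a' (mem_filter.2 ⟨ha', h⟩) a (mem_filter.2 ⟨ha, rfl⟩)
  -- Elements of large `s`-fibers go, two at a time, to the elements of `B` that are no `s`-image;
  -- any other `a` keeps `s a`, of which it is then the only preimage.
  set ρ : α → β := fun a => if a ∈ L then π a else s a
  have hρL : ∀ a ∈ L, ρ a = π a := fun a h => if_pos h
  have hρs : ∀ a ∉ L, ρ a = s a := fun a h => if_neg h
  have hπL : ∀ a ∈ L, c (ρ a) = 0 := fun a h => hρL a h ▸ (mem_filter.1 (hπ a h)).2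
  refine ⟨ρ, fun a ha => ?_, fun a ha a' ha' h => ?_, fun b => ?_⟩
  · by_cases haL : a ∈ L
    exacts [hρL a haL ▸ (mem_filter.1 (hπ a haL)).1, hρs a haL ▸ hs a ha]
  · by_cases haL : a ∈ L
    · exact absurd (h ▸ hπL a haL) (hempty a' ha')
    · exact hsmall a ha haL a' ha' (h.trans (hρs a haL))
  · by_cases hb : c b = 0
    · refine le_trans (card_le_card fun a ha => ?_) (hπfiber b)
      obtain ⟨ha, hab⟩ := mem_filter.1 ha
      by_cases haL : a ∈ L
      · exact mem_filter.2 ⟨haL, hρL a haL ▸ hab⟩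
      · exact absurd hb (hab ▸ (hρs a haL).symm ▸ hempty a ha)
    · have hfiber : ∀ a, ρ a = b → a ∉ L ∧ s a = b := fun a hab =>
        have haL : a ∉ L := fun haL => hb (hab ▸ hπL a haL)
        ⟨haL, (hρs a haL).symm.trans hab⟩
      refine (card_le_one.2 fun a ha a' ha' => ?_).trans one_le_two
      obtain ⟨ha, hab⟩ := mem_filter.1 ha
      obtain ⟨ha', ha'b⟩ := mem_filter.1 ha'
      obtain ⟨haL, hsa⟩ := hfiber a hab
      exact (hsmall a ha haL a' ha' ((hfiber a' ha'b).2.trans hsa.symm)).symm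

end Pairing

theorem dist_le_two_mul_dist_add_of_dist_le {V : Type*} [PseudoMetricSpace V] {j o f f' : V}
    (h : dist o f' ≤ dist o f) : dist j f' ≤ 2 * dist j o + dist j f := by
  linarith [dist_triangle j o f', dist_triangle o j f, dist_comm o j]

section Swap

variable {V : Type*} [MetricSpace V]

noncomputable def nearest (F : Finset V) (hF : F.Nonempty) (j : V) : V :=
  (F.exists_mem_eq_inf' hF (dist j)).choose

variable {F Fstar : Finset V} (hF : F.Nonempty) (hFstar : Fstar.Nonempty)

theorem nearest_mem (j : V) : nearest F hF j ∈ F :=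
  (F.exists_mem_eq_inf' hF (dist j)).choose_spec.1

theorem distSet_eq_dist_nearest (j : V) : distSet j F hF = dist j (nearest F hF j) :=
  (F.exists_mem_eq_inf' hF (dist j)).choose_spec.2

theorem distSet_le_dist {j f : V} (hf : f ∈ F) : distSet j F hF ≤ dist j f :=
  inf'_le _ hf

theorem dist_nearest_le {j f : V} (hf : f ∈ F) : dist j (nearest F hF j) ≤ dist j f :=
  distSet_eq_dist_nearest hF j ▸ distSet_le_dist hF hf

theorem kmed_eq_sum_dist_nearest [Fintype V] : kmed F hF = ∑ j, dist j (nearest F hF j) :=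
  sum_congr rfl fun j _ => distSet_eq_dist_nearest hF j

variable [DecidableEq V]

/-- With `σ`, `τ` the nearest-facility maps of `F` and `F*`, this bounds the extra cost of client
`j` in the swap `(r, o)`: `j` moves to `o` if `τ j = o`, and to `σ (τ j)` if it lost `σ j = r`. -/
noncomputable def swapExcess (σ τ : V → V) (r o j : V) : ℝ :=
  (if τ j = o then dist j (τ j) - dist j (σ j) else 0) +
    if σ j = r then 2 * dist j (τ j) else 0

theorem distSet_swap_le {r o : V} (hr : ∀ o' ∈ Fstar, nearest F hF o' = r → o' = o) (j : V) :
    distSet j (insert o (F.erase r)) (insert_nonempty _ _) ≤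
      dist j (nearest F hF j) + swapExcess (nearest F hF) (nearest Fstar hFstar) r o j := by
  set σ := nearest F hF
  set τ := nearest Fstar hFstar
  have hkeep : ∀ f ∈ F, f ≠ r → distSet j (insert o (F.erase r)) (insert_nonempty _ _) ≤ dist j f :=
    fun f hf hfr => distSet_le_dist _ (mem_insert_of_mem (mem_erase.2 ⟨hfr, hf⟩))
  unfold swapExcess
  by_cases hτ : τ j = o
  · subst hτ
    have hmove := distSet_le_dist (j := j) (insert_nonempty (τ j) (F.erase r)) (mem_insert_self _ _)
    have hreroute : 0 ≤ if σ j = r then 2 * dist j (τ j) else 0 := by positivity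
    rw [if_pos rfl]
    linarith
  rw [if_neg hτ, zero_add]
  by_cases hσ : σ j = r
  · have hne : σ (τ j) ≠ r := fun h => hτ (hr _ (nearest_mem hFstar j) h)
    calc _ ≤ dist j (σ (τ j)) := hkeep _ (nearest_mem hF _) hne
      _ ≤ 2 * dist j (τ j) + dist j (σ j) :=
        dist_le_two_mul_dist_add_of_dist_le (dist_nearest_le hF (nearest_mem hF j))
      _ = _ := by rw [if_pos hσ]; ring
  · rw [if_neg hσ, add_zero]
    exact hkeep _ (nearest_mem hF j) hσ

theorem kmed_swap_le [Fintype V] {r o : V}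
    (hr : ∀ o' ∈ Fstar, nearest F hF o' = r → o' = o) :
    kmed (insert o (F.erase r)) (insert_nonempty _ _) ≤
      kmed F hF + ∑ j, swapExcess (nearest F hF) (nearest Fstar hFstar) r o j := by
  rw [kmed, kmed_eq_sum_dist_nearest, ← sum_add_distrib]
  exact sum_le_sum fun j _ => distSet_swap_le hF hFstar hr j

theorem sum_swapExcess_le {σ τ ρ : V → V} {j : V} (hτ : τ j ∈ Fstar)
    (hρ : #{o ∈ Fstar | ρ o = σ j} ≤ 2) :
    ∑ o ∈ Fstar, swapExcess σ τ (ρ o) o j ≤ 5 * dist j (τ j) - dist j (σ j) := by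
  simp only [swapExcess]
  rw [sum_add_distrib, sum_ite_eq, if_pos hτ, ← sum_filter, sum_const, nsmul_eq_mul]
  have hρ' : (#{o ∈ Fstar | σ j = ρ o} : ℝ) ≤ 2 := by
    simp only [eq_comm (a := σ j)]
    exact_mod_cast hρ
  nlinarith [dist_nonneg (x := j) (y := τ j)]

end Swap

/-- If `F` is single-swap locally optimal for the k-median objective, then
`kmed(F) ≤ 5 · kmed(F*)` for any `F*` of the same cardinality. -/
theorem kmed_single_swap_local_opt {V : Type*} [MetricSpace V] [Fintype V] [DecidableEq V]
    (k : ℕ) (F Fstar : Finset V) (hF : F.Nonempty) (hFstar : Fstar.Nonempty)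
    (hcardF : F.card = k) (hcardFstar : Fstar.card = k)
    (hlocal : ∀ r ∈ F, ∀ f' : V,
      kmed (insert f' (F.erase r)) (insert_nonempty _ _) ≥ kmed F hF) :
    kmed F hF ≤ 5 * kmed Fstar hFstar := by
  set σ := nearest F hF
  set τ := nearest Fstar hFstar
  obtain ⟨ρ, hρF, hρcapt, hρfiber⟩ := exists_partner_fiber_card_le_two σ
    (fun o _ => nearest_mem hF o) (hcardF.trans hcardFstar.symm).ge
  have hswap : ∀ o ∈ Fstar, 0 ≤ ∑ j, swapExcess σ τ (ρ o) o j := fun o ho => by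
    linarith [hlocal (ρ o) (hρF o ho) o, kmed_swap_le hF hFstar (hρcapt o ho)]
  have : 0 ≤ 5 * kmed Fstar hFstar - kmed F hF :=
    calc 0 ≤ ∑ o ∈ Fstar, ∑ j, swapExcess σ τ (ρ o) o j := sum_nonneg hswap
      _ = ∑ j, ∑ o ∈ Fstar, swapExcess σ τ (ρ o) o j := sum_comm
      _ ≤ ∑ j, (5 * dist j (τ j) - dist j (σ j)) :=
        sum_le_sum fun j _ => sum_swapExcess_le (nearest_mem hFstar j) (hρfiber _)
      _ = _ := by rw [sum_sub_distrib, ← mul_sum, kmed_eq_sum_dist_nearest,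
        kmed_eq_sum_dist_nearest]
  linarith
end

section
/- (Projection Lemma) Let (V,d) be a finite metric space, let F, F* ⊆ V be nonempty, let j ∈ V, let f* ∈ F* be a closest point of F* to j (i.e., d(j,f*) = d(j,F*)), and let f ∈ F be a closest point of F to f* (i.e., d(f*,f) ≤ d(f*,g) for all g ∈ F). Then d(j,f) ≤ 2·d(j,F*) + d(j,F). -/
open Finset

/-- Projection Lemma: if `f*` is a closest point of `F*` to `j` and `f` is a
closest point of `F` to `f*`, then `d(j,f) ≤ 2·d(j,F*) + d(j,F)`. -/
theorem projection_lemma {V : Type*} [MetricSpace V]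
    (F Fstar : Finset V) (hF : F.Nonempty) (hFstar : Fstar.Nonempty)
    (j fstar f : V) (hfstar : fstar ∈ Fstar) (hf : f ∈ F)
    (hclosest : dist j fstar = distSet j Fstar hFstar)
    (hnear : ∀ g ∈ F, dist fstar f ≤ dist fstar g) :
    dist j f ≤ 2 * distSet j Fstar hFstar + distSet j F hF := by
  obtain ⟨g, hg, hgmin⟩ := F.exists_mem_eq_inf' hF (fun f => dist j f)
  have hgd : distSet j F hF = dist j g := hgmin
  calc dist j f ≤ dist j fstar + dist fstar f := dist_triangle _ _ _
    _ ≤ dist j fstar + dist fstar g := by linarith [hnear g hg]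
    _ ≤ dist j fstar + (dist fstar j + dist j g) := by linarith [dist_triangle fstar j g]
    _ = 2 * distSet j Fstar hFstar + distSet j F hF := by
        rw [dist_comm fstar j, hclosest, hgd]; ring
end

section
/- Let (V,d) be a finite metric space and F, F* ⊆ V nonempty. Let φ : V → F and φ* : V → F* assign each point to a closest facility of F and of F* respectively, set A_j = d(j,F), O_j = d(j,F*), N(f) = φ^{-1}(f), N*(f*) = (φ*)^{-1}(f*), and let η : F* → F map each f* to a closest point of F. Suppose r ∈ F and f* ∈ F* satisfy η^{-1}(r) ⊆ {f*}. Then kmed((F \ {r}) ∪ {f*}) − kmed(F) ≤ Σ_{j ∈ N*(f*)} (O_j − A_j) + 2·Σ_{j ∈ N(r)} O_j. -/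
open Finset

/-- Bound on the change in k-median cost for a test swap `(r, f*)` with
`η⁻¹(r) ⊆ {f*}`. -/
theorem kmed_swap_bound {V : Type*} [MetricSpace V] [Fintype V] [DecidableEq V]
    (F Fstar : Finset V) (hF : F.Nonempty) (hFstar : Fstar.Nonempty)
    (φ φstar η : V → V)
    (hφ : ∀ j : V, φ j ∈ F ∧ dist j (φ j) = distSet j F hF)
    (hφstar : ∀ j : V, φstar j ∈ Fstar ∧ dist j (φstar j) = distSet j Fstar hFstar)
    (hη : ∀ g ∈ Fstar, η g ∈ F ∧ ∀ f ∈ F, dist g (η g) ≤ dist g f)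
    (r : V) (hr : r ∈ F) (fstar : V) (hfstar : fstar ∈ Fstar)
    (hpre : ∀ g ∈ Fstar, η g = r → g = fstar) :
    kmed (insert fstar (F.erase r)) (insert_nonempty _ _) - kmed F hF ≤
      (∑ j ∈ univ.filter (fun j => φstar j = fstar),
        (distSet j Fstar hFstar - distSet j F hF))
      + 2 * ∑ j ∈ univ.filter (fun j => φ j = r), distSet j Fstar hFstar := by
  have hF'ne : (insert fstar (F.erase r)).Nonempty := insert_nonempty _ _
  have key : ∀ j : V, distSet j (insert fstar (F.erase r)) hF'ne - distSet j F hF ≤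
      (if φstar j = fstar then distSet j Fstar hFstar - distSet j F hF else 0)
      + (if φ j = r then 2 * distSet j Fstar hFstar else 0) := by
    intro j
    have hO : 0 ≤ distSet j Fstar hFstar := by
      rw [← (hφstar j).2]; exact dist_nonneg
    have hle : ∀ f ∈ insert fstar (F.erase r),
        distSet j (insert fstar (F.erase r)) hF'ne ≤ dist j f :=
      fun f hf => inf'_le _ hf
    by_cases h1 : φstar j = fstar
    · have hb : distSet j (insert fstar (F.erase r)) hF'ne ≤ distSet j Fstar hFstar := by
        calc distSet j (insert fstar (F.erase r)) hF'ne ≤ dist j fstar :=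
              hle _ (mem_insert_self _ _)
          _ = distSet j Fstar hFstar := by rw [← h1, (hφstar j).2]
      by_cases h2 : φ j = r <;> simp only [if_pos h1, if_pos, if_neg, h2] <;> simp <;> linarith
    · by_cases h2 : φ j = r
      · have hg := hφstar j
        have hηg := hη (φstar j) hg.1
        have hgr : η (φstar j) ≠ r := fun h => h1 (hpre _ hg.1 h)
        have hmem : η (φstar j) ∈ insert fstar (F.erase r) :=
          mem_insert_of_mem (mem_erase.2 ⟨hgr, hηg.1⟩)
        have t1 := hle _ hmem
        have t2 := dist_triangle j (φstar j) (η (φstar j))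
        have t3 := hηg.2 _ (hφ j).1
        have t4 := dist_triangle (φstar j) j (φ j)
        have e1 : dist j (φstar j) = distSet j Fstar hFstar := hg.2
        have e2 : dist j (φ j) = distSet j F hF := (hφ j).2
        have e3 : dist (φstar j) j = dist j (φstar j) := dist_comm _ _
        simp only [if_neg h1, if_pos h2]
        linarith
      · have hmem : φ j ∈ insert fstar (F.erase r) :=
          mem_insert_of_mem (mem_erase.2 ⟨h2, (hφ j).1⟩)
        have hb : distSet j (insert fstar (F.erase r)) hF'ne ≤ distSet j F hF := by
          rw [← (hφ j).2]; exact hle _ hmem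
        simp only [if_neg h1, if_neg h2]
        linarith
  calc kmed (insert fstar (F.erase r)) (insert_nonempty _ _) - kmed F hF
      = ∑ j : V, (distSet j (insert fstar (F.erase r)) hF'ne - distSet j F hF) := by
        rw [kmed, kmed, ← Finset.sum_sub_distrib]
    _ ≤ ∑ j : V, ((if φstar j = fstar then distSet j Fstar hFstar - distSet j F hF else 0)
        + (if φ j = r then 2 * distSet j Fstar hFstar else 0)) :=
        Finset.sum_le_sum fun j _ => key j
    _ = _ := by
        rw [Finset.sum_add_distrib, Finset.mul_sum]
        congr 1
        · exact (Finset.sum_filter _ _).symm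
        · exact (Finset.sum_filter _ _).symm
end

section
/- Let F and F* be finite sets with |F| = |F*| = k ≥ 1 and let η : F* → F be any function. Then there exists a set S ⊆ F × F* of exactly k pairs such that: (i) each f* ∈ F* appears in exactly one pair of S; (ii) each r ∈ F appears in at most two pairs of S; and (iii) for every pair (r, f*) ∈ S, η^{-1}(r) ⊆ {f*} (in particular, no element of F with two or more η-preimages appears in any pair). -/
/-!
Call `g ∈ F*` lonely if it is the only element of its `η`-fibre, i.e.
`IsOnlyPreimage η F* g (η g)`. A lonely `g` is paired with `η g`; every other `g` must be paired
with an element of `Z = F \ η(F*)`, whose fibre is empty. Non-lonely elements lie in fibres of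
size at least two, so they have at most half as many images, and `|F| = |F*|` then gives
`#(non-lonely) ≤ 2 |Z|`: the non-lonely elements can be spread over `Z`, at most two per point.
-/

open Finset

section Distribution

variable {α β : Type*}

theorem Finset.exists_mapsTo_card_fiber_le_of_card_le_mul [Nonempty α] [DecidableEq α]
    {s : Finset β} {t : Finset α} {n : ℕ} (h : #s ≤ n * #t) :
    ∃ f : β → α, (∀ x ∈ s, f x ∈ t) ∧ ∀ r, #{x ∈ s | f x = r} ≤ n := by
  have hcard :
      (s : Set β).encard ≤ ((t ×ˢ range n : Finset (α × ℕ)) : Set (α × ℕ)).encard := by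
    simp only [Set.encard_coe_eq_coe_finsetCard, card_product, card_range]
    exact_mod_cast h.trans_eq (mul_comm _ _)
  obtain ⟨e, hmaps, hinj⟩ := (s : Set β).toFinite.exists_injOn_of_encard_le hcard
  refine ⟨fun x => (e x).1, fun x hx => (mem_product.1 (hmaps hx)).1, fun r => ?_⟩
  calc #{x ∈ s | (e x).1 = r}
      ≤ #({r} ×ˢ range n) := card_le_card_of_injOn e (fun x hx => by
          obtain ⟨hxs, rfl⟩ := mem_filter.1 hx
          exact mem_product.2 ⟨mem_singleton_self _, (mem_product.1 (hmaps hxs)).2⟩)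
        (hinj.mono fun x hx => (mem_filter.1 hx).1)
    _ = n := by simp

end Distribution

section Transposed

variable {α β : Type*} [DecidableEq α] [DecidableEq β]

def transposedGraph (φ : β → α) (s : Finset β) : Finset (α × β) :=
  s.image fun g => (φ g, g)

variable {φ : β → α} {s : Finset β}

theorem mem_transposedGraph {p : α × β} :
    p ∈ transposedGraph φ s ↔ p.2 ∈ s ∧ φ p.2 = p.1 := by
  obtain ⟨a, b⟩ := p
  simp [transposedGraph, and_comm, eq_comm]

theorem card_transposedGraph : #(transposedGraph φ s) = #s :=
  card_image_of_injective _ fun _ _ h => congrArg Prod.snd h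

theorem transposedGraph_subset_product {t : Finset α} (h : ∀ g ∈ s, φ g ∈ t) :
    transposedGraph φ s ⊆ t ×ˢ s := fun p hp => by
  obtain ⟨hp2, hφ⟩ := mem_transposedGraph.1 hp
  exact mem_product.2 ⟨hφ ▸ h _ hp2, hp2⟩

theorem card_filter_snd_transposedGraph {b : β} (hb : b ∈ s) :
    #{p ∈ transposedGraph φ s | p.2 = b} = 1 := by
  rw [transposedGraph, filter_image, card_image_of_injective _ fun _ _ h => congrArg Prod.snd h]
  simp [filter_eq', hb]

theorem card_filter_fst_transposedGraph {r : α} :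
    #{p ∈ transposedGraph φ s | p.1 = r} = #{g ∈ s | φ g = r} := by
  rw [transposedGraph, filter_image, card_image_of_injective _ fun _ _ h => congrArg Prod.snd h]

end Transposed

section Lonely

variable {α β : Type*}

def IsOnlyPreimage (η : β → α) (s : Finset β) (g : β) (r : α) : Prop :=
  ∀ g' ∈ s, η g' = r → g' = g

variable {η : β → α} {s : Finset β}

theorem isOnlyPreimage_of_notMem_image [DecidableEq α] {g : β} {r : α} (hr : r ∉ s.image η) :
    IsOnlyPreimage η s g r :=
  fun _ hg' hη => absurd (hη ▸ mem_image_of_mem η hg') hr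

open Classical in
theorem two_mul_card_image_le_card_not_isOnlyPreimage [DecidableEq α] :
    2 * #({g ∈ s | ¬IsOnlyPreimage η s g (η g)}.image η) ≤
      #{g ∈ s | ¬IsOnlyPreimage η s g (η g)} := by
  set M := {g ∈ s | ¬IsOnlyPreimage η s g (η g)}
  refine mul_card_image_le_card M 2 fun r hr => ?_
  obtain ⟨g, hgM, rfl⟩ := mem_image.1 hr
  obtain ⟨hgs, hg⟩ := mem_filter.1 hgM
  obtain ⟨g', hg's, hη, hne⟩ : ∃ g' ∈ s, η g' = η g ∧ g' ≠ g := by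
    simpa [IsOnlyPreimage] using hg
  have hg'M : g' ∈ M := mem_filter.2 ⟨hg's, fun h => hne (h g hgs hη.symm).symm⟩
  calc 2 = #{g', g} := (card_pair hne).symm
    _ ≤ #{a ∈ M | η a = η g} := card_le_card <| insert_subset_iff.2
        ⟨mem_filter.2 ⟨hg'M, hη⟩, singleton_subset_iff.2 (mem_filter.2 ⟨hgM, rfl⟩)⟩

open Classical in
theorem card_not_isOnlyPreimage_le [DecidableEq α] {F : Finset α} (hη : ∀ g ∈ s, η g ∈ F)
    (hcard : #s ≤ #F) :
    #{g ∈ s | ¬IsOnlyPreimage η s g (η g)} ≤ 2 * #(F \ s.image η) := by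
  set U := {g ∈ s | IsOnlyPreimage η s g (η g)}
  set M := {g ∈ s | ¬IsOnlyPreimage η s g (η g)}
  have hsplit : #U + #M = #s := card_filter_add_card_filter_not _
  have himage : #(s.image η) ≤ #U + #(M.image η) :=
    calc #(s.image η) = #(U.image η ∪ M.image η) := by
          rw [← image_union, filter_union_filter_not_eq]
      _ ≤ #U + #(M.image η) := (card_union_le _ _).trans (Nat.add_le_add_right card_image_le _)
  have hZ : #(F \ s.image η) = #F - #(s.image η) :=
    card_sdiff_of_subset (image_subset_iff.2 hη)
  have hM : 2 * #(M.image η) ≤ #M := two_mul_card_image_le_card_not_isOnlyPreimage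
  omega

theorem exists_mapsTo_card_fiber_le_two_isOnlyPreimage [Nonempty α] [DecidableEq α]
    {F : Finset α} (hη : ∀ g ∈ s, η g ∈ F) (hcard : #s ≤ #F) :
    ∃ φ : β → α, (∀ g ∈ s, φ g ∈ F) ∧ (∀ r, #{g ∈ s | φ g = r} ≤ 2) ∧
      ∀ g ∈ s, IsOnlyPreimage η s g (φ g) := by
  classical
  obtain ⟨f, hfZ, hf⟩ :=
    exists_mapsTo_card_fiber_le_of_card_le_mul (card_not_isOnlyPreimage_le hη hcard)
  set φ := fun g => if IsOnlyPreimage η s g (η g) then η g else f g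
  have hφ_lonely {g} (h : IsOnlyPreimage η s g (η g)) : φ g = η g := if_pos h
  have hφ_not_lonely {g} (hg : g ∈ s) (h : ¬IsOnlyPreimage η s g (η g)) :
      φ g ∈ F \ s.image η := by
    simp only [φ, if_neg h]
    exact hfZ g (mem_filter.2 ⟨hg, h⟩)
  refine ⟨φ, fun g hg => ?_, fun r => ?_, fun g hg => ?_⟩
  · by_cases h : IsOnlyPreimage η s g (η g)
    · exact hφ_lonely h ▸ hη g hg
    · exact (mem_sdiff.1 (hφ_not_lonely hg h)).1
  · by_cases hr : r ∈ s.image η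
    · have hfiber {g} (hg : g ∈ {g ∈ s | φ g = r}) : IsOnlyPreimage η s g r := by
        obtain ⟨hgs, rfl⟩ := mem_filter.1 hg
        by_contra h
        exact (mem_sdiff.1 (hφ_not_lonely hgs fun h' => h (hφ_lonely h' ▸ h'))).2 hr
      obtain ⟨g₀, hg₀, hr₀⟩ := mem_image.1 hr
      refine (card_le_one.2 fun a ha b hb => ?_).trans one_le_two
      exact (hfiber ha g₀ hg₀ hr₀).symm.trans (hfiber hb g₀ hg₀ hr₀)
    · refine (card_le_card fun g hg => ?_).trans (hf r)
      obtain ⟨hgs, rfl⟩ := mem_filter.1 hg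
      have h : ¬IsOnlyPreimage η s g (η g) := fun h =>
        hr (hφ_lonely h ▸ mem_image_of_mem η hgs)
      exact mem_filter.2 ⟨mem_filter.2 ⟨hgs, h⟩, (if_neg h).symm⟩
  · by_cases h : IsOnlyPreimage η s g (η g)
    · exact hφ_lonely h ▸ h
    · exact isOnlyPreimage_of_notMem_image (mem_sdiff.1 (hφ_not_lonely hg h)).2

end Lonely

/-- Existence of the set of test swaps: given finite sets `F`, `F*` with
`|F| = |F*| = k ≥ 1` and a map `η : F* → F`, there is a set `S ⊆ F × F*` of
exactly `k` pairs such that each `f* ∈ F*` appears in exactly one pair, each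
`r ∈ F` appears in at most two pairs, and every pair `(r, f*) ∈ S` satisfies
`η⁻¹(r) ⊆ {f*}`. -/
theorem test_swaps_exist {α β : Type*} [DecidableEq α] [DecidableEq β]
    (k : ℕ) (hk : 1 ≤ k) (F : Finset α) (Fstar : Finset β) (η : β → α)
    (hcardF : F.card = k) (hcardFstar : Fstar.card = k)
    (hη : ∀ g ∈ Fstar, η g ∈ F) :
    ∃ S : Finset (α × β),
      S ⊆ F ×ˢ Fstar ∧
      S.card = k ∧
      (∀ fstar ∈ Fstar, (S.filter (fun p => p.2 = fstar)).card = 1) ∧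
      (∀ r ∈ F, (S.filter (fun p => p.1 = r)).card ≤ 2) ∧
      (∀ p ∈ S, ∀ g ∈ Fstar, η g = p.1 → g = p.2) := by
  obtain ⟨r, -⟩ := card_pos.1 (by omega : 0 < #F)
  have : Nonempty α := ⟨r⟩
  obtain ⟨φ, hφF, hφfib, hφonly⟩ :=
    exists_mapsTo_card_fiber_le_two_isOnlyPreimage hη (by omega)
  refine ⟨transposedGraph φ Fstar, transposedGraph_subset_product hφF,
    by rw [card_transposedGraph, hcardFstar], fun b hb => card_filter_snd_transposedGraph hb,
    fun r _ => card_filter_fst_transposedGraph.trans_le (hφfib r), fun p hp g hg hgp => ?_⟩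
  obtain ⟨hp2, hφp⟩ := mem_transposedGraph.1 hp
  exact hφonly _ hp2 g hg (hgp.trans hφp.symm)
end

section
/- Let (V,d) be a finite metric space and F, F* ⊆ V nonempty. Let φ : V → F and φ* : V → F* be closest-facility assignments, set A_j = d(j,F), O_j = d(j,F*), N(R) = φ^{-1}(R), N*(G) = (φ*)^{-1}(G), and let η : F* → F be a nearest-facility map. Suppose R_i ⊆ F and nonempty F*_i ⊆ F* satisfy η^{-1}(R_i) ⊆ F*_i. Then kmed((F \ R_i) ∪ F*_i) − kmed(F) ≤ Σ_{j ∈ N*(F*_i)} (O_j − A_j) + 2·Σ_{j ∈ N(R_i)} O_j. -/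
open Finset

lemma distSet_le {V : Type*} [MetricSpace V] (j : V) (F : Finset V) (hF : F.Nonempty)
    {f : V} (hf : f ∈ F) : distSet j F hF ≤ dist j f :=
  Finset.inf'_le _ hf

lemma distSet_nonneg {V : Type*} [MetricSpace V] (j : V) (F : Finset V) (hF : F.Nonempty) :
    0 ≤ distSet j F hF :=
  Finset.le_inf' hF _ fun _ _ => dist_nonneg

/-- Bound on the change in k-median cost when swapping a block `R_i ⊆ F` for a
nonempty block `F*_i ⊆ F*` with `η⁻¹(R_i) ⊆ F*_i`. -/
theorem kmed_block_swap_bound {V : Type*} [MetricSpace V] [Fintype V] [DecidableEq V]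
    (F Fstar : Finset V) (hF : F.Nonempty) (hFstar : Fstar.Nonempty)
    (φ φstar η : V → V)
    (hφ : ∀ j : V, φ j ∈ F ∧ dist j (φ j) = distSet j F hF)
    (hφstar : ∀ j : V, φstar j ∈ Fstar ∧ dist j (φstar j) = distSet j Fstar hFstar)
    (hη : ∀ g ∈ Fstar, η g ∈ F ∧ ∀ f ∈ F, dist g (η g) ≤ dist g f)
    (Ri : Finset V) (hRi : Ri ⊆ F)
    (Fsi : Finset V) (hFsi : Fsi ⊆ Fstar) (hFsiNe : Fsi.Nonempty)
    (hpre : ∀ g ∈ Fstar, η g ∈ Ri → g ∈ Fsi) :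
    kmed ((F \ Ri) ∪ Fsi) (hFsiNe.mono subset_union_right) - kmed F hF ≤
      (∑ j ∈ univ.filter (fun j => φstar j ∈ Fsi),
        (distSet j Fstar hFstar - distSet j F hF))
      + 2 * ∑ j ∈ univ.filter (fun j => φ j ∈ Ri), distSet j Fstar hFstar := by
  set S : Finset V := (F \ Ri) ∪ Fsi with hSdef
  have hS : S.Nonempty := hFsiNe.mono subset_union_right
  rw [Finset.mul_sum, Finset.sum_filter, Finset.sum_filter]
  rw [kmed, kmed, ← Finset.sum_sub_distrib, ← Finset.sum_add_distrib]
  apply Finset.sum_le_sum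
  intro j _
  have hA := (hφ j).2
  have hO := (hφstar j).2
  have hOpos : 0 ≤ distSet j Fstar hFstar := distSet_nonneg _ _ _
  by_cases h1 : φstar j ∈ Fsi
  · have hmem : φstar j ∈ S := Finset.mem_union_right _ h1
    have hle : distSet j S hS ≤ distSet j Fstar hFstar := by
      rw [← hO]; exact distSet_le _ _ _ hmem
    simp only [h1, if_pos]
    have : (0:ℝ) ≤ if φ j ∈ Ri then 2 * distSet j Fstar hFstar else 0 := by
      split <;> positivity
    linarith
  · simp only [h1, if_neg, not_false_iff]
    by_cases h2 : φ j ∈ Ri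
    · simp only [h2, if_pos]
      set g := φstar j with hg
      have hgF : g ∈ Fstar := (hφstar j).1
      have hηg := hη g hgF
      have hηnotRi : η g ∉ Ri := fun h => h1 (hpre g hgF h)
      have hmem : η g ∈ S := Finset.mem_union_left _ (Finset.mem_sdiff.mpr ⟨hηg.1, hηnotRi⟩)
      have hle : distSet j S hS ≤ dist j (η g) := distSet_le _ _ _ hmem
      have htri : dist j (η g) ≤ dist j g + dist g (η g) := dist_triangle _ _ _
      have h3 : dist g (η g) ≤ dist g (φ j) := hηg.2 _ (hφ j).1
      have h4 : dist g (φ j) ≤ dist g j + dist j (φ j) := dist_triangle _ _ _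
      have h5 : dist g j = dist j g := dist_comm _ _
      rw [← hO, ← hA] at *
      linarith
    · simp only [h2, if_neg, not_false_iff]
      have hmem : φ j ∈ S := Finset.mem_union_left _ (Finset.mem_sdiff.mpr ⟨(hφ j).1, h2⟩)
      have hle : distSet j S hS ≤ dist j (φ j) := distSet_le _ _ _ hmem
      rw [hA] at hle
      linarith
end

section
/- Let (V,d) be a finite metric space, p ≥ 1 a real number, and F, F* ⊆ V nonempty. Let φ* : V → F* be a closest-facility assignment and let η : F* → F be a nearest-facility map. Then Σ_{j ∈ V} d(j, η(φ*(j)))^p ≤ (2·Φ_p(F*) + Φ_p(F))^p. -/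
open Finset

/-- The ℓ_p-norm cost of a nonempty facility set `F`:
`Φ_p(F) = (∑_{j ∈ V} d(j,F)^p)^{1/p}`. -/
noncomputable def phiP {V : Type*} [MetricSpace V] [Fintype V] (p : ℝ) (F : Finset V)
    (hF : F.Nonempty) : ℝ :=
  (∑ j : V, distSet j F hF ^ p) ^ (1 / p)

/-- `∑_{j ∈ V} d(j, η(φ*(j)))^p ≤ (2·Φ_p(F*) + Φ_p(F))^p`. -/
theorem projection_sum_bound {V : Type*} [MetricSpace V] [Fintype V]
    (p : ℝ) (hp : 1 ≤ p)
    (F Fstar : Finset V) (hF : F.Nonempty) (hFstar : Fstar.Nonempty)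
    (φstar η : V → V)
    (hφstar : ∀ j : V, φstar j ∈ Fstar ∧ dist j (φstar j) = distSet j Fstar hFstar)
    (hη : ∀ g ∈ Fstar, η g ∈ F ∧ ∀ f ∈ F, dist g (η g) ≤ dist g f) :
    ∑ j : V, dist j (η (φstar j)) ^ p ≤
      (2 * phiP p Fstar hFstar + phiP p F hF) ^ p := by
  have hp0 : 0 < p := lt_of_lt_of_le one_pos hp
  set Ds : V → ℝ := fun j => distSet j Fstar hFstar with hDs
  set D : V → ℝ := fun j => distSet j F hF with hD
  have hDs0 : ∀ j, 0 ≤ Ds j := fun j => by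
    obtain ⟨g, hg, hgeq⟩ := Finset.exists_mem_eq_inf' hFstar (fun f => dist j f)
    rw [hDs]; simp only [distSet, hgeq]; exact dist_nonneg
  have hD0 : ∀ j, 0 ≤ D j := fun j => by
    obtain ⟨g, hg, hgeq⟩ := Finset.exists_mem_eq_inf' hF (fun f => dist j f)
    rw [hD]; simp only [distSet, hgeq]; exact dist_nonneg
  -- pointwise bound
  have key : ∀ j : V, dist j (η (φstar j)) ≤ 2 * Ds j + D j := by
    intro j
    obtain ⟨f, hfF, hfeq⟩ := Finset.exists_mem_eq_inf' hF (fun f => dist j f)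
    have hDj : D j = dist j f := by rw [hD]; simp [distSet, hfeq]
    obtain ⟨hgF, hgd⟩ := hφstar j
    set g := φstar j
    obtain ⟨_, hmin⟩ := hη g hgF
    calc dist j (η g) ≤ dist j g + dist g (η g) := dist_triangle _ _ _
      _ ≤ dist j g + dist g f := by linarith [hmin f hfF]
      _ ≤ dist j g + (dist g j + dist j f) := by linarith [dist_triangle g j f]
      _ = 2 * Ds j + D j := by
          have h1 : Ds j = dist j g := hgd.symm
          rw [hDj, h1, dist_comm g j]; ring
  have step1 : ∑ j : V, dist j (η (φstar j)) ^ p ≤ ∑ j : V, (2 * Ds j + D j) ^ p := by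
    apply Finset.sum_le_sum
    intro j _
    exact Real.rpow_le_rpow dist_nonneg (key j) (le_of_lt hp0)
  refine le_trans step1 ?_
  -- Minkowski
  have h2Ds0 : ∀ j ∈ Finset.univ (α := V), (0:ℝ) ≤ 2 * Ds j := fun j _ => mul_nonneg (by norm_num) (hDs0 j)
  have hD0' : ∀ j ∈ Finset.univ (α := V), (0:ℝ) ≤ D j := fun j _ => hD0 j
  have mink := Real.Lp_add_le_of_nonneg (f := fun j => 2 * Ds j) (g := D) Finset.univ hp h2Ds0 hD0'
  have hsum0 : (0:ℝ) ≤ ∑ j : V, (2 * Ds j + D j) ^ p := by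
    apply Finset.sum_nonneg; intro j _
    exact Real.rpow_nonneg (add_nonneg (mul_nonneg (by norm_num) (hDs0 j)) (hD0 j)) p
  have hphis : (∑ j : V, (2 * Ds j) ^ p) ^ (1/p) = 2 * phiP p Fstar hFstar := by
    rw [phiP]
    have : ∀ j : V, (2 * Ds j) ^ p = 2 ^ p * Ds j ^ p := fun j =>
      Real.mul_rpow (by norm_num) (hDs0 j)
    simp_rw [this, ← Finset.mul_sum]
    rw [Real.mul_rpow (Real.rpow_nonneg (by norm_num) p)
        (Finset.sum_nonneg fun j _ => Real.rpow_nonneg (hDs0 j) p),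
      ← Real.rpow_mul (by norm_num : (0:ℝ) ≤ 2), mul_one_div_cancel (ne_of_gt hp0),
      Real.rpow_one]
  have hphi : (∑ j : V, D j ^ p) ^ (1/p) = phiP p F hF := rfl
  rw [hphis, hphi] at mink
  have hrhs0 : 0 ≤ 2 * phiP p Fstar hFstar + phiP p F hF := by
    have := (Real.rpow_nonneg hsum0 (1/p)).trans mink
    linarith
  calc ∑ j : V, (2 * Ds j + D j) ^ p
      = ((∑ j : V, (2 * Ds j + D j) ^ p) ^ (1/p)) ^ p := by
        rw [← Real.rpow_mul hsum0, one_div_mul_cancel (ne_of_gt hp0), Real.rpow_one]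
    _ ≤ (2 * phiP p Fstar hFstar + phiP p F hF) ^ p :=
        Real.rpow_le_rpow (Real.rpow_nonneg hsum0 _) mink (le_of_lt hp0)
end

section
/- For every real p ≥ 2 and every real α > 5p, it holds that 1/α^p + 2·(1 + 2/α)^p − 3 < 0. -/
lemma exp_two_fifths_lt : Real.exp (2/5) < 1.492 := by
  by_contra h
  push_neg at h
  have h5 : (1.492:ℝ)^5 ≤ Real.exp (2/5) ^ 5 :=
    pow_le_pow_left₀ (by norm_num) h 5
  have he : Real.exp (2/5) ^ 5 = Real.exp 2 := by
    rw [← Real.exp_nat_mul]; norm_num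
  have h2 : Real.exp 2 = Real.exp 1 * Real.exp 1 := by
    rw [← Real.exp_add]; norm_num
  have h1 := Real.exp_one_lt_d9
  rw [he, h2] at h5
  nlinarith [Real.exp_pos 1]

/-- For every real `p ≥ 2` and every real `α > 5p`,
`1/α^p + 2·(1 + 2/α)^p − 3 < 0`. -/
theorem analytic_ineq_single_swap (p α : ℝ) (hp : 2 ≤ p) (hα : 5 * p < α) :
    1 / α ^ p + 2 * (1 + 2 / α) ^ p - 3 < 0 := by
  have hp0 : (0:ℝ) < p := by linarith
  have hα10 : (10:ℝ) ≤ α := by linarith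
  have hα0 : (0:ℝ) < α := by linarith
  have h100 : (100:ℝ) ≤ α ^ p := by
    calc (100:ℝ) = 10 ^ (2:ℝ) := by
          rw [show (2:ℝ) = ((2:ℕ):ℝ) by norm_num, Real.rpow_natCast]; norm_num
      _ ≤ 10 ^ p := (Real.rpow_le_rpow_left_iff (by norm_num)).mpr hp
      _ ≤ α ^ p := Real.rpow_le_rpow (by norm_num) hα10 hp0.le
  have h1 : 1 / α ^ p ≤ 1/100 := by
    apply one_div_le_one_div_of_le (by norm_num) h100
  have hb : (1 + 2/α) ^ p ≤ Real.exp (2/α) ^ p := by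
    apply Real.rpow_le_rpow (by positivity) _ hp0.le
    have := Real.add_one_le_exp (2/α); linarith
  have he : Real.exp (2/α) ^ p = Real.exp (2/α * p) := by
    rw [Real.rpow_def_of_pos (Real.exp_pos _), Real.log_exp]
  have hlt : 2/α * p < 2/5 := by
    rw [div_mul_eq_mul_div, div_lt_div_iff₀ hα0 (by norm_num)]
    nlinarith
  have hkey : (1 + 2/α) ^ p < 1.492 := by
    calc (1 + 2/α) ^ p ≤ Real.exp (2/α * p) := he ▸ hb
      _ < Real.exp (2/5) := Real.exp_lt_exp.mpr hlt
      _ < 1.492 := exp_two_fifths_lt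
  linarith
end

section
/- For every integer t ≥ 1, every real p ≥ 2, and every real α > (3 + 2/t)·p, it holds that 1/α^p + (1 + 1/t)·(1 + 2/α)^p − (2 + 1/t) < 0. -/
/-- For every integer `t ≥ 1`, every real `p ≥ 2`, and every real
`α > (3 + 2/t)·p`, it holds that
`1/α^p + (1 + 1/t)·(1 + 2/α)^p − (2 + 1/t) < 0`. -/
theorem analytic_ineq_t_swap (t : ℕ) (ht : 1 ≤ t) (p α : ℝ) (hp : 2 ≤ p)
    (hα : (3 + 2 / (t : ℝ)) * p < α) :
    1 / α ^ p + (1 + 1 / (t : ℝ)) * (1 + 2 / α) ^ p - (2 + 1 / (t : ℝ)) < 0 := by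
  have htR : (1:ℝ) ≤ (t:ℝ) := by exact_mod_cast ht
  have htpos : (0:ℝ) < (t:ℝ) := by linarith
  rw [show (2:ℝ)/(t:ℝ) = 2*(1/(t:ℝ)) by ring] at hα
  set c : ℝ := 1/(t:ℝ) with hc
  have hc0 : 0 < c := by positivity
  have hc1 : c ≤ 1 := by rw [hc, div_le_one htpos]; exact htR
  set a : ℝ := 3 + 2*c with hadef
  have ha3 : (3:ℝ) < a := by rw [hadef]; linarith
  have ha5 : a ≤ 5 := by rw [hadef]; linarith
  have hca : c = (a-3)/2 := by rw [hadef]; ring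
  clear_value c a
  have hap : a * p < α := hα
  have hp0 : (0:ℝ) < p := by linarith
  have ha0 : (0:ℝ) < a := by linarith
  have hα6 : 6 < α := by nlinarith
  have hα0 : (0:ℝ) < α := by linarith
  have hα1 : (1:ℝ) ≤ α := by linarith
  -- Step A : 1/α^p < 1/(4a²)
  have hA : 4*a^2 < α ^ p := by
    have h1 : α ^ (2:ℝ) ≤ α ^ p := Real.rpow_le_rpow_of_exponent_le hα1 hp
    have h2 : α ^ (2:ℝ) = α * α := by
      rw [show (2:ℝ) = ((2:ℕ):ℝ) by norm_num, Real.rpow_natCast]; ring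
    have h2a : 2*a < α := by nlinarith
    have h3 : (2*a)*(2*a) < α*α := mul_self_lt_mul_self (by positivity) h2a
    calc 4*a^2 = (2*a)*(2*a) := by ring
      _ < α*α := h3
      _ = α ^ (2:ℝ) := h2.symm
      _ ≤ α ^ p := h1
  have hApos : (0:ℝ) < 4*a^2 := by positivity
  have hb1 : 1/α^p < 1/(4*a^2) := one_div_lt_one_div_of_lt hApos hA
  -- Step B : (1+2/α)^p < exp (2/a)
  have hb2 : (1 + 2/α) ^ p < Real.exp (2/a) := by
    have h1x : (0:ℝ) < 1 + 2/α := by positivity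
    rw [Real.rpow_def_of_pos h1x]
    apply Real.exp_lt_exp.mpr
    have hlog : Real.log (1 + 2/α) ≤ 2/α := by
      have := Real.log_le_sub_one_of_pos h1x
      linarith
    have h2 : Real.log (1 + 2/α) * p ≤ (2/α) * p :=
      mul_le_mul_of_nonneg_right hlog (le_of_lt hp0)
    have h3 : (2/α) * p < 2/a := by
      rw [div_mul_eq_mul_div, div_lt_div_iff₀ hα0 ha0]
      nlinarith
    linarith
  -- Step C : exp x ≤ 1 + x + x²/2 + (2/9)x³  for x = 2/a ∈ (0,1]
  set x : ℝ := 2/a with hxdef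
  clear_value x
  have hx0 : (0:ℝ) < x := by rw [hxdef]; positivity
  have hx1 : x ≤ 1 := by rw [hxdef, div_le_one ha0]; linarith
  have hxnn : (0:ℝ) ≤ x := le_of_lt hx0
  have hb3 : Real.exp x ≤ 1 + x + x^2/2 + 2/9 * x^3 := by
    have h := Real.exp_bound (x := x) (by rw [abs_of_nonneg hxnn]; exact hx1)
      (by norm_num : 0 < 3)
    rw [abs_of_nonneg hxnn] at h
    have hsum : (∑ i ∈ Finset.range 3, x ^ i / (Nat.factorial i : ℝ))
        = 1 + x + x^2/2 := by
      simp [Finset.sum_range_succ, Nat.factorial]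
    rw [hsum] at h
    have h' := (abs_sub_le_iff.mp h).1
    norm_num [Nat.factorial] at h'
    nlinarith [h']
  -- Step D : polynomial inequality
  have heq : 2 + c - (1/(4*a^2) + (1+c)*(1 + x + x^2/2 + 2/9*x^3))
      = (32 - 5*a)/(36*a^3) := by
    rw [hxdef, hca]
    field_simp
    ring
  have hpos : (0:ℝ) < (32 - 5*a)/(36*a^3) := by
    apply div_pos (by linarith) (by positivity)
  -- Combine
  have hB : (1 + 2/α) ^ p < 1 + x + x^2/2 + 2/9*x^3 := lt_of_lt_of_le hb2 hb3
  have h1c : (0:ℝ) < 1 + c := by linarith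
  have hmul : (1+c) * ((1 + 2/α) ^ p) < (1+c) * (1 + x + x^2/2 + 2/9*x^3) :=
    mul_lt_mul_of_pos_left hB h1c
  linarith
end

section
/- Let (V,d) be a finite metric space with facility opening costs fac : V → ℝ_{≥0}, and let F ⊆ V be nonempty. Suppose that opening any facility does not improve the cost, i.e., for every f' ∈ V, UFL(F ∪ {f'}) ≥ UFL(F). Then for every nonempty F* ⊆ V, the connection cost satisfies Σ_{j ∈ V} d(j,F) ≤ Σ_{f ∈ F*} fac(f) + Σ_{j ∈ V} d(j,F*). -/
open Finset

/-- The uncapacitated facility location cost of a nonempty facility set `F`: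
`UFL(F) = ∑_{f ∈ F} fac(f) + ∑_{j ∈ V} d(j,F)`. -/
noncomputable def UFL {V : Type*} [MetricSpace V] [Fintype V] (fac : V → ℝ)
    (F : Finset V) (hF : F.Nonempty) : ℝ :=
  (∑ f ∈ F, fac f) + ∑ j : V, distSet j F hF

/-- Connection cost bound: if opening any facility does not improve the UFL
cost, then `∑_j d(j,F) ≤ fac(F*) + ∑_j d(j,F*)` for every nonempty `F*`. -/
theorem ufl_connection_cost {V : Type*} [MetricSpace V] [Fintype V] [DecidableEq V]
    (fac : V → ℝ) (hfac : ∀ f : V, 0 ≤ fac f)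
    (F : Finset V) (hF : F.Nonempty)
    (hopen : ∀ f' : V, UFL fac (insert f' F) (insert_nonempty _ _) ≥ UFL fac F hF) :
    ∀ (Fstar : Finset V) (hFstar : Fstar.Nonempty),
      ∑ j : V, distSet j F hF ≤ (∑ f ∈ Fstar, fac f) + ∑ j : V, distSet j Fstar hFstar := by
  intro Fstar hFstar
  have hσ : ∀ j : V, ∃ f ∈ Fstar, distSet j Fstar hFstar = dist j f := fun j =>
    Fstar.exists_mem_eq_inf' hFstar _
  choose σ hσmem hσval using hσ
  -- basic facts about distSet of insert
  have hle : ∀ (j f' : V),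
      distSet j (insert f' F) (insert_nonempty _ _) ≤ distSet j F hF := by
    intro j f'
    obtain ⟨f, hf, hfe⟩ := F.exists_mem_eq_inf' hF (fun f => dist j f)
    simp only [distSet]
    rw [hfe]
    exact Finset.inf'_le _ (mem_insert_of_mem hf)
  have hle' : ∀ (j f' : V),
      distSet j (insert f' F) (insert_nonempty _ _) ≤ dist j f' := fun j f' =>
    Finset.inf'_le _ (mem_insert_self _ _)
  -- key inequality from local optimality
  have key : ∀ f' : V,
      ∑ j : V, (distSet j F hF - distSet j (insert f' F) (insert_nonempty _ _))
        ≤ fac f' := by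
    intro f'
    have h := hopen f'
    unfold UFL at h
    have hfs : ∑ f ∈ insert f' F, fac f ≤ fac f' + ∑ f ∈ F, fac f := by
      by_cases hmem : f' ∈ F
      · rw [Finset.insert_eq_self.2 hmem]
        linarith [hfac f']
      · rw [Finset.sum_insert hmem]
    rw [Finset.sum_sub_distrib]
    linarith
  -- fiberwise decomposition over σ
  have hfib1 : ∑ f' ∈ Fstar, ∑ j ∈ Finset.univ.filter (fun j => σ j = f'),
      distSet j F hF = ∑ j : V, distSet j F hF := by
    exact Finset.sum_fiberwise_of_maps_to (fun j _ => hσmem j) _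
  have hfib2 : ∑ f' ∈ Fstar, ∑ j ∈ Finset.univ.filter (fun j => σ j = f'),
      distSet j Fstar hFstar = ∑ j : V, distSet j Fstar hFstar := by
    exact Finset.sum_fiberwise_of_maps_to (fun j _ => hσmem j) _
  rw [← hfib1, ← hfib2, ← Finset.sum_add_distrib]
  apply Finset.sum_le_sum
  intro f' _
  set T := Finset.univ.filter (fun j => σ j = f') with hT
  have h1 : ∑ j ∈ T, distSet j F hF
      ≤ ∑ j ∈ T, distSet j (insert f' F) (insert_nonempty _ _)
        + ∑ j ∈ T, (distSet j F hF - distSet j (insert f' F) (insert_nonempty _ _)) := by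
    rw [← Finset.sum_add_distrib]
    apply Finset.sum_le_sum
    intro j _; ring_nf; exact le_refl _
  have h2 : ∑ j ∈ T, (distSet j F hF - distSet j (insert f' F) (insert_nonempty _ _))
      ≤ fac f' := by
    refine le_trans ?_ (key f')
    apply Finset.sum_le_sum_of_subset_of_nonneg (Finset.subset_univ T)
    intro j _ _
    linarith [hle j f']
  have h3 : ∑ j ∈ T, distSet j (insert f' F) (insert_nonempty _ _)
      ≤ ∑ j ∈ T, distSet j Fstar hFstar := by
    apply Finset.sum_le_sum
    intro j hj
    have hjσ : σ j = f' := by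
      simpa [hT] using hj
    rw [hσval j, hjσ]
    exact hle' j f'
  linarith
end
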